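/- The number of pairs of surjections from $[m]$ and $[n]$ onto a common linearly ordered set, i.e., $\psi_{2+2}(m,n) = \sum_{j \ge 0} (j!)^2 S(m,j) S(n,j)$ where $S$ denotes Stirling numbers of the second kind, counts labeled height-2 bipartite posets on bottom set $[n]$ and top set $[m]$ that avoid $(2+2)$ and have no all-seeing vertices. -/

import Mathlib

/-!
A bipartite relation `E ⊆ [n] × [m]` whose up-sets form a chain is recorded by levels: rank each
bottom vertex `b` by its up-set `U b` in the chain of up-sets, and each top vertex `t` by the
largest up-set missing it. This gives maps `f : [m] → Fin j`, `g : [n] → Fin j` with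
`(b, t) ∈ E ↔ f t < g b`, where `j` is the length of the chain. Having no all-seeing vertices is
exactly what makes both maps surjective, and conversely the pair of surjections is recovered
from `E` because `g b ≤ g b'` iff `U b ⊆ U b'`. Surjections `[n] → Fin j` are counted by
`j! S(n, j)` through the recurrence of `S`, splitting on the value at `0`.
-/

/-- Stirling numbers of the second kind: `stirling n j` is the number of partitions
of an `n`-element set into `j` nonempty blocks. -/
def stirling : ℕ → ℕ → ℕ
  | 0, 0 => 1
  | 0, _ + 1 => 0
  | _ + 1, 0 => 0
  | n + 1, j + 1 => (j + 1) * stirling n (j + 1) + stirling n j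

open Finset Function

theorem Set.compl_singleton_subset_iff {α : Type*} {a : α} {s : Set α} :
    {a}ᶜ ⊆ s ↔ s = Set.univ ∨ s = {a}ᶜ := by
  constructor
  · intro h
    by_cases ha : a ∈ s
    · exact .inl (Set.eq_univ_of_forall fun x => by
        by_cases hx : x = a
        · exact hx ▸ ha
        · exact h hx)
    · exact .inr (h.antisymm' fun x hx hxa => ha (Set.mem_singleton_iff.1 hxa ▸ hx))
  · rintro (rfl | rfl) <;> simp

theorem Fin.surjective_cons_iff {n j : ℕ} (c : Fin (j + 1)) (g : Fin n → Fin (j + 1)) :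
    Surjective (Fin.cons c g : Fin (n + 1) → Fin (j + 1)) ↔
      Surjective g ∨ Set.range g = {c}ᶜ := by
  rw [← Set.range_eq_univ, ← Set.range_eq_univ, Fin.range_cons, Set.insert_eq,
    ← Set.compl_subset_iff_union, Set.compl_singleton_subset_iff]

theorem card_range_eq_compl_singleton (n : ℕ) {j : ℕ} (c : Fin (j + 1)) :
    #{g : Fin n → Fin (j + 1) | Set.range g = {c}ᶜ} =
      #{g : Fin n → Fin j | Surjective g} := by
  symm
  refine card_nbij (c.succAbove ∘ ·) ?_
    (fun g _ g' _ h => Fin.succAbove_right_injective.comp_left h) ?_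
  · intro g hg
    simp only [coe_filter, mem_univ, true_and, Set.mem_ofPred_eq] at hg ⊢
    rw [Set.range_comp, hg.range_eq, Set.image_univ, Fin.range_succAbove]
  · intro g hg
    simp only [coe_filter, mem_univ, true_and, Set.mem_ofPred_eq] at hg
    obtain ⟨g', rfl⟩ :=
      Set.range_subset_range_iff_exists_comp.1 (hg.trans (Fin.range_succAbove c).symm).le
    refine ⟨g', ?_, rfl⟩
    simp only [coe_filter, mem_univ, true_and, Set.mem_ofPred_eq, ← Set.range_eq_univ]
    apply Set.image_injective.2 Fin.succAbove_right_injective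
    rw [Set.image_univ, ← Set.range_comp, hg, Fin.range_succAbove]

theorem card_surjective_fin_succ_succ (n j : ℕ) :
    #{f : Fin (n + 1) → Fin (j + 1) | Surjective f} =
      (j + 1) * (#{g : Fin n → Fin (j + 1) | Surjective g} +
        #{g : Fin n → Fin j | Surjective g}) := by
  have hfiber (c : Fin (j + 1)) :
      #{g : Fin n → Fin (j + 1) | Surjective (Fin.cons c g : Fin (n + 1) → Fin (j + 1))} =
        #{g : Fin n → Fin (j + 1) | Surjective g} + #{g : Fin n → Fin j | Surjective g} := by
    simp_rw [Fin.surjective_cons_iff, filter_or]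
    rw [card_union_of_disjoint, card_range_eq_compl_singleton]
    refine disjoint_filter.2 fun g _ hg hc => ?_
    have hcg : c ∈ Set.range g := hg.range_eq ▸ Set.mem_univ c
    simp [hc] at hcg
  calc #{f : Fin (n + 1) → Fin (j + 1) | Surjective f}
      = ∑ c, #{g : Fin n → Fin (j + 1) |
          Surjective (Fin.cons c g : Fin (n + 1) → Fin (j + 1))} := by
        simp only [card_filter]
        rw [← Fintype.sum_prod_type']
        exact (Fintype.sum_equiv (Fin.consEquiv fun _ => Fin (j + 1)) _ _ fun _ => rfl).symm
    _ = _ := by simp [hfiber]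

theorem card_surjective_fin (n j : ℕ) :
    #{f : Fin n → Fin j | Surjective f} = j.factorial * stirling n j := by
  induction n generalizing j with
  | zero =>
    cases j with
    | zero => decide
    | succ j => simp [stirling, Surjective]
  | succ n ih =>
    cases j with
    | zero => simp [stirling]
    | succ j =>
      rw [card_surjective_fin_succ_succ, ih, ih, stirling, Nat.factorial_succ]
      ring

variable {α β : Type*}

theorem Fin.exists_orderIso_of_le_iff {j j' : ℕ} {g : α → Fin j} {g' : α → Fin j'}
    (hg : Surjective g) (hg' : Surjective g') (h : ∀ x y, g x ≤ g y ↔ g' x ≤ g' y) :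
    ∃ e : Fin j ≃o Fin j', ∀ x, e (g x) = g' x := by
  set φ : Fin j → Fin j' := g' ∘ surjInv hg
  have hφ (x : α) : φ (g x) = g' x :=
    have hx := surjInv_eq hg (g x)
    le_antisymm ((h _ _).1 hx.le) ((h _ _).1 hx.ge)
  have hmono : StrictMono φ := by
    intro i i'
    obtain ⟨x, rfl⟩ := hg i
    obtain ⟨y, rfl⟩ := hg i'
    simpa only [hφ, ← not_le, h] using id
  refine ⟨hmono.orderIsoOfSurjective φ fun i => ?_, hφ⟩
  obtain ⟨x, rfl⟩ := hg' i
  exact ⟨g x, hφ x⟩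

theorem exists_surjective_fin_lt_iff [Fintype α] {γ : Type*} [LinearOrder γ] (d : β → γ)
    (u : α → γ) (h : Set.range d = Set.range u) :
    ∃ j, ∃ (f : β → Fin j) (g : α → Fin j), Surjective f ∧ Surjective g ∧
      ∀ t b, f t < g b ↔ d t < u b := by
  classical
  set V := univ.image u
  have hV {x : γ} : x ∈ V ↔ x ∈ Set.range u := by simp [V]
  set e := V.orderIsoOfFin rfl
  refine ⟨#V, fun t => e.symm ⟨d t, hV.2 (h ▸ ⟨t, rfl⟩)⟩, fun b => e.symm ⟨u b, hV.2 ⟨b, rfl⟩⟩,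
    fun i => ?_, fun i => ?_, fun t b => by simp [e.symm.lt_iff_lt]⟩
  · obtain ⟨t, ht⟩ := h ▸ hV.1 (e i).2
    exact ⟨t, by simp [ht]⟩
  · obtain ⟨b, hb⟩ := hV.1 (e i).2
    exact ⟨b, by simp [hb]⟩

/-- `E` is a `(2+2)`-avoiding height-2 bipartite poset without all-seeing vertices. -/
def IsFaceoff (E : Finset (α × β)) : Prop :=
  (∀ b b' : α, (∀ t, (b, t) ∈ E → (b', t) ∈ E) ∨ (∀ t, (b', t) ∈ E → (b, t) ∈ E)) ∧
    (∀ b : α, ∃ t : β, (b, t) ∉ E) ∧ (∀ t : β, ∃ b : α, (b, t) ∉ E)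

instance [Fintype α] [Fintype β] [DecidableEq α] [DecidableEq β] :
    DecidablePred (IsFaceoff (α := α) (β := β)) :=
  fun _ => inferInstanceAs (Decidable (_ ∧ _ ∧ _))

section levelRel

variable [Fintype α] [Fintype β] {γ : Type*} [LinearOrder γ]

def levelRel (f : β → γ) (g : α → γ) : Finset (α × β) :=
  {p | f p.2 < g p.1}

@[simp]
theorem mem_levelRel {f : β → γ} {g : α → γ} {b : α} {t : β} :
    (b, t) ∈ levelRel f g ↔ f t < g b := by
  simp [levelRel]

theorem le_iff_forall_mem_levelRel {f : β → γ} (g : α → γ) (hf : Surjective f) (b b' : α) :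
    g b ≤ g b' ↔ ∀ t, (b, t) ∈ levelRel f g → (b', t) ∈ levelRel f g := by
  simp only [mem_levelRel]
  refine ⟨fun h t ht => ht.trans_le h, fun h => ?_⟩
  by_contra! hlt
  obtain ⟨t, ht⟩ := hf (g b')
  exact (ht ▸ h t (ht ▸ hlt)).false

theorem isFaceoff_levelRel {f : β → γ} {g : α → γ} (hf : Surjective f) (hg : Surjective g) :
    IsFaceoff (levelRel f g) := by
  refine ⟨fun b b' => ?_, fun b => ?_, fun t => ?_⟩
  · rcases le_total (g b) (g b') with h | h
    · exact .inl ((le_iff_forall_mem_levelRel g hf b b').1 h)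
    · exact .inr ((le_iff_forall_mem_levelRel g hf b' b).1 h)
  · obtain ⟨t, ht⟩ := hf (g b)
    exact ⟨t, by simp [ht]⟩
  · obtain ⟨b, hb⟩ := hg (f t)
    exact ⟨b, by simp [hb]⟩

theorem levelRel_injective {j j' : ℕ} {f : β → Fin j} {g : α → Fin j} {f' : β → Fin j'}
    {g' : α → Fin j'} (hf : Surjective f) (hg : Surjective g) (hf' : Surjective f')
    (hg' : Surjective g') (h : levelRel f g = levelRel f' g') :
    (⟨j, f, g⟩ : (j : ℕ) × (β → Fin j) × (α → Fin j)) = ⟨j', f', g'⟩ := by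
  obtain ⟨e, he⟩ := Fin.exists_orderIso_of_le_iff hg hg' fun b b' => by
    rw [le_iff_forall_mem_levelRel g hf, le_iff_forall_mem_levelRel g' hf', h]
  obtain rfl : j = j' := by simpa using Fintype.card_congr e.toEquiv
  obtain rfl : e = OrderIso.refl _ := Subsingleton.elim _ _
  obtain rfl : g = g' := funext he
  obtain rfl : f = f' := funext fun t => eq_of_forall_gt_iff fun i => by
    obtain ⟨b, rfl⟩ := hg i
    rw [← mem_levelRel, h, mem_levelRel]
  rfl

end levelRel

section upDegree

variable [Fintype β] [DecidableEq α] [DecidableEq β]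

def upDegree (E : Finset (α × β)) (b : α) : ℕ := #{t | (b, t) ∈ E}

namespace IsFaceoff

variable {E : Finset (α × β)}

theorem forall_mem_of_upDegree_le (hE : IsFaceoff E) {b b' : α}
    (h : upDegree E b ≤ upDegree E b') (t : β) (ht : (b, t) ∈ E) : (b', t) ∈ E := by
  refine (hE.1 b b').elim (· t ht) fun hsub => ?_
  have : univ.filter (fun t => (b', t) ∈ E) = univ.filter (fun t => (b, t) ∈ E) :=
    eq_of_subset_of_card_le (fun t => by simpa using hsub t) h
  simpa using this.ge (by simpa using ht)

variable [Fintype α]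

theorem exists_notMem_forall_upDegree_lt_mem (hE : IsFaceoff E) (b : α) :
    ∃ t, (b, t) ∉ E ∧ ∀ b', upDegree E b < upDegree E b' → (b', t) ∈ E := by
  by_cases hup : ∃ b', upDegree E b < upDegree E b'
  · obtain ⟨b', hb', hmin⟩ := exists_min_image {b' | upDegree E b < upDegree E b'}
      (upDegree E) (by simpa [filter_nonempty_iff] using hup)
    simp only [mem_filter, mem_univ, true_and] at hb' hmin
    obtain ⟨t, ht', ht⟩ : ∃ t, (b', t) ∈ E ∧ (b, t) ∉ E := by
      by_contra! hsub
      exact (card_le_card fun t => by simpa using hsub t).not_gt hb'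
    exact ⟨t, ht, fun b'' hb'' => hE.forall_mem_of_upDegree_le (hmin b'' hb'') t ht'⟩
  · simp only [not_exists, not_lt] at hup
    obtain ⟨t, ht⟩ := hE.2.1 b
    exact ⟨t, ht, fun b' hb' => absurd hb' (hup b').not_gt⟩

theorem exists_levelRel_eq (hE : IsFaceoff E) :
    ∃ j, ∃ (f : β → Fin j) (g : α → Fin j), Surjective f ∧ Surjective g ∧
      levelRel f g = E := by
  choose w hw hmax using fun t => exists_max_image {b | (b, t) ∉ E} (upDegree E)
    (by simpa [filter_nonempty_iff] using hE.2.2 t)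
  simp only [mem_filter, mem_univ, true_and] at hw hmax
  have hmem (b : α) (t : β) : (b, t) ∈ E ↔ upDegree E (w t) < upDegree E b :=
    ⟨fun h => lt_of_not_ge fun hle => hw t (hE.forall_mem_of_upDegree_le hle t h),
      fun h => by_contra fun hbt => (hmax t b hbt).not_gt h⟩
  have hrange : Set.range (upDegree E ∘ w) = Set.range (upDegree E) := by
    refine (Set.range_comp_subset_range _ _).antisymm fun _ ⟨b, hb⟩ => ?_
    obtain ⟨t, ht, hup⟩ := hE.exists_notMem_forall_upDegree_lt_mem b
    exact ⟨t, hb ▸ le_antisymm (le_of_not_gt fun hlt => hw t (hup _ hlt)) (hmax t b ht)⟩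
  obtain ⟨j, f, g, hf, hg, hfg⟩ := exists_surjective_fin_lt_iff _ _ hrange
  exact ⟨j, f, g, hf, hg, by ext ⟨b, t⟩; rw [mem_levelRel, hfg, hmem]; rfl⟩

end IsFaceoff

end upDegree

theorem card_isFaceoff [Fintype α] [Fintype β] [DecidableEq α] [DecidableEq β] :
    #{E : Finset (α × β) | IsFaceoff E} =
      ∑ j ∈ range (min (Fintype.card β) (Fintype.card α) + 1),
        #{f : β → Fin j | Surjective f} * #{g : α → Fin j | Surjective g} := by
  simp_rw [← card_product, ← card_sigma]
  symm
  refine card_bij (fun x _ => levelRel x.2.1 x.2.2) ?_ ?_ ?_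
  · rintro ⟨j, f, g⟩ hx
    simp only [mem_sigma, mem_product, mem_filter, mem_univ, true_and] at hx
    simpa using isFaceoff_levelRel hx.2.1 hx.2.2
  · rintro ⟨j, f, g⟩ hx ⟨j', f', g'⟩ hx' h
    simp only [mem_sigma, mem_product, mem_filter, mem_univ, true_and] at hx hx'
    exact levelRel_injective hx.2.1 hx.2.2 hx'.2.1 hx'.2.2 h
  · intro E hE
    obtain ⟨j, f, g, hf, hg, rfl⟩ := (mem_filter.1 hE).2.exists_levelRel_eq
    refine ⟨⟨j, f, g⟩, ?_, rfl⟩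
    simp only [mem_sigma, mem_range, mem_product, mem_filter, mem_univ, true_and,
      Nat.lt_succ_iff]
    refine ⟨le_min ?_ ?_, hf, hg⟩
    · simpa using Fintype.card_le_of_surjective f hf
    · simpa using Fintype.card_le_of_surjective g hg

/-- The number of labeled height-2 bipartite posets on bottom `[n]` and top `[m]` that
avoid `(2+2)` (up-sets of bottom vertices form a chain under inclusion) and have no
all-seeing vertices equals `ψ_{2+2}(m,n) = ∑_j (j!)² S(m,j) S(n,j)`. -/
theorem labeled_faceoff_count (m n : ℕ) :
    (Finset.univ.filter (fun E : Finset (Fin n × Fin m) =>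
        (∀ b b' : Fin n, (∀ t, (b, t) ∈ E → (b', t) ∈ E) ∨ (∀ t, (b', t) ∈ E → (b, t) ∈ E)) ∧
        (∀ b : Fin n, ∃ t : Fin m, (b, t) ∉ E) ∧
        (∀ t : Fin m, ∃ b : Fin n, (b, t) ∉ E))).card
    = ∑ j ∈ Finset.range (min m n + 1), (j.factorial) ^ 2 * stirling m j * stirling n j := by
  calc _ = #{E : Finset (Fin n × Fin m) | IsFaceoff E} := by congr
    _ = ∑ j ∈ range (min m n + 1),
          #{f : Fin m → Fin j | Surjective f} * #{g : Fin n → Fin j | Surjective g} := by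
      simpa using card_isFaceoff (α := Fin n) (β := Fin m)
    _ = _ := sum_congr rfl fun j _ => by rw [card_surjective_fin, card_surjective_fin]; ring
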